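/- Let ε₀ > 0 be sufficiently small, let K_L be sufficiently large, and let h₀(ξ,η) = ξη + Σ_{i=3}^{d} Σ_{j=0}^{i} b_{i,j} ξ^{i−j} η^{j} be a polynomial with 100^d Σ_{i=3}^{d} Σ_{j=0}^{i} |b_{i,j}| ≤ ε₀. Let ζ̄ = (ζ̄₁, ζ̄₂) ∈ [-2,2]² be a point with |ζ̄| > (2K_L)^{-1} and |ζ̄₁| ≥ |ζ̄₂|. Then |∂₂h₀(ζ̄)| ≥ 1/(3K_L) and |∂₂h₀(ζ̄)| ≥ (1/2)|∂₁h₀(ζ̄)|, where ∂₁, ∂₂ denote the partial derivatives in ξ and η. -/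

import Mathlib

/-! Since `|η| ≤ |ξ| ≤ 2`, every monomial in the partial derivatives of the higher order part of
`h₀` is bounded by `d · 2^d · |ξ|` times its coefficient, so the smallness of the coefficients gives
`|∂₂h₀ - ξ| ≤ ε₀|ξ|` and `|∂₁h₀ - η| ≤ ε₀|ξ|`. Hence `|∂₂h₀| ≈ |ξ| ≥ |∂₁h₀| / 2`, and `|ξ|` is
comparable to `|ζ̄| > (2K_L)⁻¹` because `|ζ̄| ≤ √2 |ξ|`. -/

noncomputable section

/-- The normalized polynomial `h₀(ξ,η) = ξη + Σ_{i=3}^d Σ_{j=0}^i b_{i,j} ξ^{i-j} η^j`. -/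
def hpoly0 (d : ℕ) (b : ℕ → ℕ → ℝ) (ξ η : ℝ) : ℝ :=
  ξ * η + ∑ i ∈ Finset.Icc 3 d, ∑ j ∈ Finset.range (i + 1), b i j * ξ ^ (i - j) * η ^ j

/-- Smallness of the higher order coefficients: `100^d Σ |b_{i,j}| ≤ ε₀`. -/
def CoeffSmall0 (d : ℕ) (ε₀ : ℝ) (b : ℕ → ℕ → ℝ) : Prop :=
  100 ^ d * ∑ i ∈ Finset.Icc 3 d, ∑ j ∈ Finset.range (i + 1), |b i j| ≤ ε₀

/-- Partial derivative in the first variable. -/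
def pd1 (g : ℝ → ℝ → ℝ) : ℝ → ℝ → ℝ := fun x y => deriv (fun s => g s y) x

/-- Partial derivative in the second variable. -/
def pd2 (g : ℝ → ℝ → ℝ) : ℝ → ℝ → ℝ := fun x y => deriv (fun t => g x t) y

open Finset

lemma hasDerivAt_hpoly0_snd (d : ℕ) (b : ℕ → ℕ → ℝ) (x y : ℝ) :
    HasDerivAt (hpoly0 d b x)
      (x + ∑ i ∈ Icc 3 d, ∑ j ∈ range (i + 1), b i j * x ^ (i - j) * (j * y ^ (j - 1))) y := by
  refine ((hasDerivAt_id y).const_mul x |>.congr_deriv (mul_one x)).add ?_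
  refine HasDerivAt.fun_sum fun i _ => HasDerivAt.fun_sum fun j _ => ?_
  exact (hasDerivAt_pow j y).const_mul (b i j * x ^ (i - j))

lemma hasDerivAt_hpoly0_fst (d : ℕ) (b : ℕ → ℕ → ℝ) (x y : ℝ) :
    HasDerivAt (fun s => hpoly0 d b s y)
      (y + ∑ i ∈ Icc 3 d, ∑ j ∈ range (i + 1),
        b i j * ((i - j : ℕ) * x ^ (i - j - 1)) * y ^ j) x := by
  refine ((hasDerivAt_id x).mul_const y |>.congr_deriv (one_mul y)).add ?_
  refine HasDerivAt.fun_sum fun i _ => HasDerivAt.fun_sum fun j _ => ?_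
  exact ((hasDerivAt_pow (i - j) x).const_mul (b i j)).mul_const (y ^ j)

lemma abs_sum_sum_le_mul_sum_sum_abs {ι κ : Type*} (s : Finset ι) (t : ι → Finset κ)
    (f b : ι → κ → ℝ) (M : ℝ) (h : ∀ i ∈ s, ∀ j ∈ t i, |f i j| ≤ M * |b i j|) :
    |∑ i ∈ s, ∑ j ∈ t i, f i j| ≤ M * ∑ i ∈ s, ∑ j ∈ t i, |b i j| := by
  simp only [mul_sum]
  refine (abs_sum_le_sum_abs _ _).trans (sum_le_sum fun i hi => ?_)
  exact (abs_sum_le_sum_abs _ _).trans (sum_le_sum (h i hi))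

lemma inv_three_mul_le_of_inv_two_mul_lt_sqrt {K x y : ℝ} (hK : 0 < K) (hyx : |y| ≤ |x|)
    (h : (2 * K)⁻¹ < √(x ^ 2 + y ^ 2)) : 1 / (3 * K) ≤ 99 / 100 * |x| := by
  rw [Real.lt_sqrt (by positivity), ← sq_abs x, ← sq_abs y] at h
  have hy2 : |y| ^ 2 ≤ |x| ^ 2 := pow_le_pow_left₀ (abs_nonneg y) hyx 2
  rw [← pow_le_pow_iff_left₀ (by positivity) (by positivity) two_ne_zero]
  have : (1 / (3 * K)) ^ 2 = 4 / 9 * ((2 * K)⁻¹) ^ 2 := by field_simp; ring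
  rw [this]
  nlinarith

lemma pow_mul_pow_le_two_pow_mul {x y : ℝ} (hx : |x| ≤ 2) (hyx : |y| ≤ |x|) {a c d : ℕ}
    (hpos : 1 ≤ a + c) (hle : a + c ≤ d) : |x| ^ a * |y| ^ c ≤ 2 ^ d * |x| :=
  calc |x| ^ a * |y| ^ c ≤ |x| ^ a * |x| ^ c := by gcongr
    _ = |x| ^ (a + c - 1) * |x| := by rw [← pow_add, ← pow_succ, Nat.sub_add_cancel hpos]
    _ ≤ 2 ^ (a + c - 1) * |x| := by gcongr
    _ ≤ 2 ^ d * |x| := by gcongr <;> [norm_num; omega]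

variable {d : ℕ} {b : ℕ → ℕ → ℝ} {x y : ℝ}

lemma abs_pd2_hpoly0_sub_le (hx : |x| ≤ 2) (hyx : |y| ≤ |x|) :
    |pd2 (hpoly0 d b) x y - x| ≤
      d * 2 ^ d * |x| * ∑ i ∈ Icc 3 d, ∑ j ∈ range (i + 1), |b i j| := by
  rw [pd2, (hasDerivAt_hpoly0_snd d b x y).deriv, add_sub_cancel_left]
  refine abs_sum_sum_le_mul_sum_sum_abs _ _ _ _ _ fun i hi j hj => ?_
  rw [mem_Icc] at hi
  rw [mem_range] at hj
  rcases Nat.eq_zero_or_pos j with rfl | hj0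
  · simp only [CharP.cast_eq_zero, zero_mul, mul_zero, abs_zero]; positivity
  have hjd : (j : ℝ) ≤ d := by exact_mod_cast (show j ≤ d by omega)
  have := pow_mul_pow_le_two_pow_mul hx hyx (a := i - j) (c := j - 1) (d := d) (by omega) (by omega)
  calc |b i j * x ^ (i - j) * (j * y ^ (j - 1))|
      = j * (|x| ^ (i - j) * |y| ^ (j - 1)) * |b i j| := by
        simp only [abs_mul, abs_pow, Nat.abs_cast]; ring
    _ ≤ d * (2 ^ d * |x|) * |b i j| := by gcongr
    _ = d * 2 ^ d * |x| * |b i j| := by ring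

lemma abs_pd1_hpoly0_sub_le (hx : |x| ≤ 2) (hyx : |y| ≤ |x|) :
    |pd1 (hpoly0 d b) x y - y| ≤
      d * 2 ^ d * |x| * ∑ i ∈ Icc 3 d, ∑ j ∈ range (i + 1), |b i j| := by
  rw [pd1, (hasDerivAt_hpoly0_fst d b x y).deriv, add_sub_cancel_left]
  refine abs_sum_sum_le_mul_sum_sum_abs _ _ _ _ _ fun i hi j hj => ?_
  rw [mem_Icc] at hi
  rw [mem_range] at hj
  rcases Nat.eq_or_lt_of_le (Nat.lt_succ_iff.mp hj) with rfl | hji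
  · simp only [Nat.sub_self, CharP.cast_eq_zero, zero_mul, mul_zero, abs_zero]; positivity
  have hjd : ((i - j : ℕ) : ℝ) ≤ d := by exact_mod_cast (show i - j ≤ d by omega)
  have := pow_mul_pow_le_two_pow_mul hx hyx (a := i - j - 1) (c := j) (d := d) (by omega) (by omega)
  calc |b i j * ((i - j : ℕ) * x ^ (i - j - 1)) * y ^ j|
      = (i - j : ℕ) * (|x| ^ (i - j - 1) * |y| ^ j) * |b i j| := by
        simp only [abs_mul, abs_pow, Nat.abs_cast]; ring
    _ ≤ d * (2 ^ d * |x|) * |b i j| := by gcongr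
    _ = d * 2 ^ d * |x| * |b i j| := by ring

lemma natCast_mul_two_pow_le_hundred_pow (d : ℕ) : (d : ℝ) * 2 ^ d ≤ 100 ^ d :=
  calc (d : ℝ) * 2 ^ d ≤ 2 ^ d * 2 ^ d := by gcongr; exact_mod_cast Nat.lt_two_pow_self.le
    _ = 4 ^ d := by rw [← mul_pow]; norm_num
    _ ≤ 100 ^ d := by gcongr; norm_num

lemma CoeffSmall0.abs_pd_hpoly0_sub_le {ε : ℝ} (hb : CoeffSmall0 d ε b) (hx : |x| ≤ 2)
    (hyx : |y| ≤ |x|) :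
    |pd2 (hpoly0 d b) x y - x| ≤ ε * |x| ∧ |pd1 (hpoly0 d b) x y - y| ≤ ε * |x| := by
  have hS : 0 ≤ ∑ i ∈ Icc 3 d, ∑ j ∈ range (i + 1), |b i j| := by positivity
  have hsmall : d * 2 ^ d * |x| * ∑ i ∈ Icc 3 d, ∑ j ∈ range (i + 1), |b i j| ≤ ε * |x| :=
    calc _ = (d * 2 ^ d * ∑ i ∈ Icc 3 d, ∑ j ∈ range (i + 1), |b i j|) * |x| := by ring
      _ ≤ (100 ^ d * ∑ i ∈ Icc 3 d, ∑ j ∈ range (i + 1), |b i j|) * |x| := by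
        gcongr; exact natCast_mul_two_pow_le_hundred_pow d
      _ ≤ ε * |x| := by gcongr; exact hb
  exact ⟨(abs_pd2_hpoly0_sub_le hx hyx).trans hsmall, (abs_pd1_hpoly0_sub_le hx hyx).trans hsmall⟩

theorem statement9_general (d : ℕ) :
    ∃ ε₀' > (0 : ℝ), ∀ ε₀ : ℝ, 0 < ε₀ → ε₀ ≤ ε₀' →
      ∃ K₀ : ℝ, ∀ KL : ℝ, K₀ ≤ KL →
        ∀ b : ℕ → ℕ → ℝ, CoeffSmall0 d ε₀ b →
          ∀ z : ℝ × ℝ, z ∈ Set.Icc (-2 : ℝ) 2 ×ˢ Set.Icc (-2 : ℝ) 2 →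
            (2 * KL)⁻¹ < Real.sqrt (z.1 ^ 2 + z.2 ^ 2) →
            |z.2| ≤ |z.1| →
            1 / (3 * KL) ≤ |pd2 (hpoly0 d b) z.1 z.2| ∧
            1 / 2 * |pd1 (hpoly0 d b) z.1 z.2| ≤ |pd2 (hpoly0 d b) z.1 z.2| := by
  refine ⟨1 / 100, by norm_num, fun ε _ hε => ⟨1, fun K hK b hb ⟨x, y⟩ hz hfar hyx => ?_⟩⟩
  dsimp only at hfar hyx ⊢
  obtain ⟨h2, h1⟩ := hb.abs_pd_hpoly0_sub_le (abs_le.mpr hz.1) hyx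
  have hx : 1 / (3 * K) ≤ 99 / 100 * |x| :=
    inv_three_mul_le_of_inv_two_mul_lt_sqrt (by linarith) hyx hfar
  have hεx : ε * |x| ≤ 1 / 100 * |x| := by gcongr
  have hpd2 : 99 / 100 * |x| ≤ |pd2 (hpoly0 d b) x y| := by
    have := abs_sub_abs_le_abs_sub x (pd2 (hpoly0 d b) x y)
    rw [abs_sub_comm] at this
    linarith
  have hpd1 : |pd1 (hpoly0 d b) x y| ≤ 101 / 100 * |x| := by
    have := abs_sub_abs_le_abs_sub (pd1 (hpoly0 d b) x y) y
    linarith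
  exact ⟨hx.trans hpd2, by linarith [abs_nonneg x]⟩

/-- lower bounds on `∂₂h₀` at the normalized second base point `ζ̄`. -/
theorem statement9 (d : ℕ) (hd : 3 ≤ d) :
    ∃ ε₀' > (0 : ℝ), ∀ ε₀ : ℝ, 0 < ε₀ → ε₀ ≤ ε₀' →
      ∃ K₀ : ℝ, ∀ KL : ℝ, K₀ ≤ KL →
        ∀ b : ℕ → ℕ → ℝ, CoeffSmall0 d ε₀ b →
          ∀ z : ℝ × ℝ, z ∈ Set.Icc (-2 : ℝ) 2 ×ˢ Set.Icc (-2 : ℝ) 2 →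
            (2 * KL)⁻¹ < Real.sqrt (z.1 ^ 2 + z.2 ^ 2) →
            |z.2| ≤ |z.1| →
            1 / (3 * KL) ≤ |pd2 (hpoly0 d b) z.1 z.2| ∧
            1 / 2 * |pd1 (hpoly0 d b) z.1 z.2| ≤ |pd2 (hpoly0 d b) z.1 z.2| :=
  statement9_general d
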